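/- arXiv:1804.01035 — 3 statements merged into one kernel-verified Lean document; each statement's English description precedes it below -/
import Mathlib

section
/- Let α > 0 and let v_{l₁} ≤ v_{l₂} < ṽ ≤ v and v ≤ v_{r₂} ≤ v_{r₁} be real numbers. Then (e^{α(v_{r₁} - v_{l₁})} - e^{α(v_{r₂} - v_{l₂})}) / (e^{α(v_{r₁} - ṽ)} - e^{α(v_{r₂} - ṽ)}) ≥ 1, provided v_{r₁} > v_{r₂} (so the denominator is positive). -/
theorem exp_ratio_ge_one (α v vl1 vl2 vt vr1 vr2 : ℝ)
    (hα : 0 < α)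
    (hl : vl1 ≤ vl2) (hlt : vl2 < vt) (htv : vt ≤ v)
    (hvr2 : v ≤ vr2) (hr : vr2 ≤ vr1) (hrstrict : vr2 < vr1) :
    1 ≤ (Real.exp (α * (vr1 - vl1)) - Real.exp (α * (vr2 - vl2))) /
        (Real.exp (α * (vr1 - vt)) - Real.exp (α * (vr2 - vt))) := by
  have hd : Real.exp (α * (vr2 - vt)) < Real.exp (α * (vr1 - vt)) :=
    Real.exp_lt_exp.2 (by nlinarith)
  rw [le_div_iff₀ (by linarith)]
  have e1 : Real.exp (α * (vr1 - vl1)) =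
      Real.exp (α * (vr1 - vt)) * Real.exp (α * (vt - vl1)) := by
    rw [← Real.exp_add]; ring_nf
  have e2 : Real.exp (α * (vr2 - vl2)) =
      Real.exp (α * (vr2 - vt)) * Real.exp (α * (vt - vl2)) := by
    rw [← Real.exp_add]; ring_nf
  have hc : Real.exp (α * (vt - vl2)) ≤ Real.exp (α * (vt - vl1)) :=
    Real.exp_le_exp.2 (by nlinarith)
  have hc1 : 1 ≤ Real.exp (α * (vt - vl2)) := by
    rw [Real.one_le_exp_iff]; nlinarith
  have hp := Real.exp_pos (α * (vr2 - vt))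
  nlinarith [hd.le, hp.le]
end

section
/- Let γ, α, β > 0, fix a real v, and for a finite set 𝒱 ⊆ ℝ containing some element ≤ v and some element ≥ v, define D(𝒱) = d(v_l, v_r) where v_l = max{w ∈ 𝒱 : w ≤ v}, v_r = min{w ∈ 𝒱 : w ≥ v}, and d(v_l, v_r) = γ e^{α(v_r − v_l)}(e^{β min(v − v_l, v_r − v)} − 1). Assume the ordering v − ṽ < v − v_{l₂} ≤ v − v_{l₁} ≤ v_{r₂} − v ≤ v_{r₁} − v, where v_{l₁}, v_{r₁} are the closest anchors to v in 𝒱₁ and v_{l₂}, v_{r₂} in 𝒱₂, with 𝒱₁ ⊆ 𝒱₂. Then D(𝒱₁) − D(𝒱₁ ∪ {ṽ}) ≥ D(𝒱₂) − D(𝒱₂ ∪ {ṽ}). -/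
noncomputable def synthDist (γ α β v vl vr : ℝ) : ℝ :=
  γ * Real.exp (α * (vr - vl)) * (Real.exp (β * min (v - vl) (vr - v)) - 1)

noncomputable def anchorDist (γ α β v : ℝ) (V : Finset ℝ) : ℝ :=
  synthDist γ α β v (((V.filter (fun w => w ≤ v)).max).unbotD 0)
    (((V.filter (fun w => v ≤ w)).min).untopD 0)

/-! Adding `t` with `vl ≤ t ≤ v` moves the left anchor to `t` and keeps the right one. Since
the left anchor is the closer one throughout, `synthDist γ α β v l r` factors as
`γ * exp (α * r) * leftFactor α β v l`, so each reduction is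
`γ * exp (α * r) * (leftFactor α β v l - leftFactor α β v t)`. As `leftFactor` is antitone on
`(-∞, v]` and the smaller anchor set has the farther anchors on both sides, both factors are
larger for it. -/

open Real Finset

noncomputable def leftFactor (α β v l : ℝ) : ℝ :=
  exp (-α * l) * (exp (β * (v - l)) - 1)

lemma leftFactor_antitoneOn {α β : ℝ} (hα : 0 ≤ α) (hβ : 0 ≤ β) (v : ℝ) :
    AntitoneOn (leftFactor α β v) (Set.Iic v) := by
  intro a _ b (hb : b ≤ v) hab
  have hb_nonneg : 0 ≤ exp (β * (v - b)) - 1 :=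
    sub_nonneg.2 (one_le_exp (mul_nonneg hβ (sub_nonneg.2 hb)))
  have hexp : exp (-α * b) ≤ exp (-α * a) := exp_le_exp.2 (by nlinarith)
  unfold leftFactor
  gcongr

lemma synthDist_eq_mul_leftFactor (γ α β : ℝ) {v l r : ℝ} (h : v - l ≤ r - v) :
    synthDist γ α β v l r = γ * exp (α * r) * leftFactor α β v l := by
  rw [synthDist, leftFactor, min_eq_left h, show α * (r - l) = α * r + -α * l by ring, exp_add]
  ring

lemma synthDist_self_left (γ α β : ℝ) {v r : ℝ} (h : v ≤ r) : synthDist γ α β v v r = 0 := by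
  simp [synthDist_eq_mul_leftFactor γ α β (show v - v ≤ r - v by linarith), leftFactor]

lemma synthDist_sub_le_sub {γ α β v t l₁ l₂ r₁ r₂ : ℝ} (hγ : 0 ≤ γ) (hα : 0 ≤ α) (hβ : 0 ≤ β)
    (hl : l₁ ≤ l₂) (hlt : l₂ ≤ t) (htv : t ≤ v) (hr : r₂ ≤ r₁) (hclose : v - l₁ ≤ r₂ - v) :
    synthDist γ α β v l₂ r₂ - synthDist γ α β v t r₂ ≤
      synthDist γ α β v l₁ r₁ - synthDist γ α β v t r₁ := by
  have hF := leftFactor_antitoneOn hα hβ v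
  have hF₂ : leftFactor α β v t ≤ leftFactor α β v l₂ :=
    hF (show l₂ ≤ v by linarith) (show t ≤ v from htv) hlt
  have hF₁ : leftFactor α β v l₂ ≤ leftFactor α β v l₁ :=
    hF (show l₁ ≤ v by linarith) (show l₂ ≤ v by linarith) hl
  rw [synthDist_eq_mul_leftFactor γ α β (show v - l₂ ≤ r₂ - v by linarith),
    synthDist_eq_mul_leftFactor γ α β (show v - t ≤ r₂ - v by linarith),
    synthDist_eq_mul_leftFactor γ α β (show v - l₁ ≤ r₁ - v by linarith),
    synthDist_eq_mul_leftFactor γ α β (show v - t ≤ r₁ - v by linarith)]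
  calc γ * exp (α * r₂) * leftFactor α β v l₂ - γ * exp (α * r₂) * leftFactor α β v t
      = γ * (exp (α * r₂) * (leftFactor α β v l₂ - leftFactor α β v t)) := by ring
    _ ≤ γ * (exp (α * r₁) * (leftFactor α β v l₁ - leftFactor α β v t)) := by
      gcongr
    _ = γ * exp (α * r₁) * leftFactor α β v l₁ - γ * exp (α * r₁) * leftFactor α β v t := by ring

section anchors

variable {γ α β v vl vr : ℝ} {V : Finset ℝ}

lemma anchorDist_eq_synthDist
    (hl : (V.filter (fun w => w ≤ v)).max = (vl : WithBot ℝ))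
    (hr : (V.filter (fun w => v ≤ w)).min = (vr : WithTop ℝ)) :
    anchorDist γ α β v V = synthDist γ α β v vl vr := by
  rw [anchorDist, hl, hr]
  rfl

lemma anchorDist_union_singleton {t : ℝ}
    (hl : (V.filter (fun w => w ≤ v)).max = (vl : WithBot ℝ))
    (hr : (V.filter (fun w => v ≤ w)).min = (vr : WithTop ℝ))
    (hlt : vl ≤ t) (htv : t ≤ v) :
    anchorDist γ α β v (V ∪ {t}) = synthDist γ α β v t vr := by
  have hvr : v ≤ vr := (mem_filter.1 (mem_of_min hr)).2
  have hleft : ((insert t V).filter (fun w => w ≤ v)).max = (t : WithBot ℝ) := by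
    rw [filter_insert, if_pos htv, max_insert, hl, ← WithBot.coe_max, max_eq_left hlt]
  rcases htv.lt_or_eq with htv | rfl
  · have hright : ((insert t V).filter (fun w => v ≤ w)).min = (vr : WithTop ℝ) := by
      rw [filter_insert, if_neg htv.not_ge, hr]
    rw [union_singleton, anchorDist_eq_synthDist hleft hright]
  -- for `t = v` the right anchor moves to `v` as well, but the distortion is `0` either way
  · have hright : ((insert t V).filter (fun w => t ≤ w)).min = (t : WithTop ℝ) := by
      rw [filter_insert, if_pos le_rfl, min_insert, hr, ← WithTop.coe_min, min_eq_left hvr]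
    rw [union_singleton, anchorDist_eq_synthDist hleft hright, synthDist_self_left γ α β le_rfl,
      synthDist_self_left γ α β hvr]

end anchors

theorem diminishing_distortion_reduction_case8a_general
    (γ α β v vt vl1 vl2 vr1 vr2 : ℝ) (V1 V2 : Finset ℝ)
    (hγ : 0 < γ) (hα : 0 < α) (hβ : 0 < β)
    (hl1 : ((V1.filter (fun w => w ≤ v)).max : WithBot ℝ) = (vl1 : WithBot ℝ))
    (hr1 : ((V1.filter (fun w => v ≤ w)).min : WithTop ℝ) = (vr1 : WithTop ℝ))
    (hl2 : ((V2.filter (fun w => w ≤ v)).max : WithBot ℝ) = (vl2 : WithBot ℝ))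
    (hr2 : ((V2.filter (fun w => v ≤ w)).min : WithTop ℝ) = (vr2 : WithTop ℝ))
    (hvt : vt ≤ v)
    (h1 : v - vt < v - vl2) (h2 : v - vl2 ≤ v - vl1)
    (h3 : v - vl1 ≤ vr2 - v) (h4 : vr2 - v ≤ vr1 - v) :
    anchorDist γ α β v V2 - anchorDist γ α β v (V2 ∪ {vt}) ≤
    anchorDist γ α β v V1 - anchorDist γ α β v (V1 ∪ {vt}) := by
  rw [anchorDist_eq_synthDist hl1 hr1, anchorDist_eq_synthDist hl2 hr2,
    anchorDist_union_singleton hl1 hr1 (by linarith) hvt,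
    anchorDist_union_singleton hl2 hr2 (by linarith) hvt]
  exact synthDist_sub_le_sub hγ.le hα.le hβ.le (by linarith) (by linarith) hvt (by linarith) h3

theorem diminishing_distortion_reduction_case8a
    (γ α β v vt vl1 vl2 vr1 vr2 : ℝ) (V1 V2 : Finset ℝ)
    (hγ : 0 < γ) (hα : 0 < α) (hβ : 0 < β)
    (hsub : V1 ⊆ V2)
    (hl1 : ((V1.filter (fun w => w ≤ v)).max : WithBot ℝ) = (vl1 : WithBot ℝ))
    (hr1 : ((V1.filter (fun w => v ≤ w)).min : WithTop ℝ) = (vr1 : WithTop ℝ))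
    (hl2 : ((V2.filter (fun w => w ≤ v)).max : WithBot ℝ) = (vl2 : WithBot ℝ))
    (hr2 : ((V2.filter (fun w => v ≤ w)).min : WithTop ℝ) = (vr2 : WithTop ℝ))
    (hvt : vt ≤ v)
    (h1 : v - vt < v - vl2) (h2 : v - vl2 ≤ v - vl1)
    (h3 : v - vl1 ≤ vr2 - v) (h4 : vr2 - v ≤ vr1 - v) :
    anchorDist γ α β v V2 - anchorDist γ α β v (V2 ∪ {vt}) ≤
    anchorDist γ α β v V1 - anchorDist γ α β v (V1 ∪ {vt}) :=
  diminishing_distortion_reduction_case8a_general γ α β v vt vl1 vl2 vr1 vr2 V1 V2 hγ hα hβ hl1 hr1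
    hl2 hr2 hvt h1 h2 h3 h4
end

section
/- Let g : 2^W → ℝ be a monotone nondecreasing submodular set function on a finite ground set W. Then for all Z₁, Z₂ ⊆ W, g(Z₁) ≤ g(Z₂) + ∑_{w ∈ Z₁ \ Z₂} (g(Z₂ ∪ {w}) − g(Z₂)). -/
theorem nwf_aux {W : Type*} [Fintype W] [DecidableEq W]
    (g : Finset W → ℝ)
    (hsub : ∀ A B : Finset W, A ⊆ B → ∀ w ∉ B,
      g (insert w B) - g B ≤ g (insert w A) - g A)
    (Z₂ : Finset W) :
    ∀ S : Finset W, Disjoint S Z₂ →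
      g (Z₂ ∪ S) ≤ g Z₂ + ∑ w ∈ S, (g (insert w Z₂) - g Z₂) := by
  intro S
  induction S using Finset.induction_on with
  | empty => simp
  | @insert a s ha ih =>
    intro hdisj
    have hdisj' : Disjoint s Z₂ := (Finset.disjoint_insert_left.mp hdisj).2
    have haZ : a ∉ Z₂ := (Finset.disjoint_insert_left.mp hdisj).1
    have haU : a ∉ Z₂ ∪ s := by simp [haZ, ha]
    have h1 : g (insert a (Z₂ ∪ s)) - g (Z₂ ∪ s) ≤ g (insert a Z₂) - g Z₂ :=
      hsub Z₂ (Z₂ ∪ s) Finset.subset_union_left a haU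
    have h2 := ih hdisj'
    rw [Finset.sum_insert ha, Finset.union_insert]
    linarith

theorem nemhauser_wolsey_fisher {W : Type*} [Fintype W] [DecidableEq W]
    (g : Finset W → ℝ)
    (hmono : ∀ A B : Finset W, A ⊆ B → g A ≤ g B)
    (hsub : ∀ A B : Finset W, A ⊆ B → ∀ w ∉ B,
      g (insert w B) - g B ≤ g (insert w A) - g A)
    (Z₁ Z₂ : Finset W) :
    g Z₁ ≤ g Z₂ + ∑ w ∈ Z₁ \ Z₂, (g (insert w Z₂) - g Z₂) := by
  have h1 : g Z₁ ≤ g (Z₂ ∪ (Z₁ \ Z₂)) := by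
    apply hmono
    intro x hx
    by_cases hx2 : x ∈ Z₂ <;> simp [hx, hx2]
  have h2 := nwf_aux g hsub Z₂ (Z₁ \ Z₂) Finset.sdiff_disjoint
  linarith
end
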